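/- Let η > 0 and t > 0 and let K_η(t,·) be the OST kernel with Fourier transform ξ ↦ e^{iξ³t − ηt(|ξ|³−|ξ|)}. Then there is no ε > 0 and M > 0 with |K_η(t,x)| ≲ 1/|x|^{2+ε} for all |x| > M. Equivalently, the kernel cannot decay at infinity faster than 1/(1+|x|²). -/

import Mathlib

open MeasureTheory

noncomputable def ostSymbol (η t ξ : ℝ) : ℂ :=
  Complex.exp (Complex.I * ((ξ ^ 3 * t : ℝ) : ℂ) - ((η * t * (|ξ| ^ 3 - |ξ|) : ℝ) : ℂ))

noncomputable def ostKernel (η t x : ℝ) : ℂ :=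
  ∫ ξ : ℝ, Complex.exp (2 * Real.pi * Complex.I * ((x * ξ : ℝ) : ℂ)) * ostSymbol η t ξ

/-!
If `|K(x)| ≤ C |x|^{-2-ε}` at infinity, then both `K` and `x K(x)` are integrable, so the Fourier
transform of `K` is differentiable. By Fourier inversion that transform is the symbol
`exp (i ξ³ t - η t (|ξ|³ - |ξ|))`, whose modulus has logarithm `η t (|ξ| - |ξ|³)`: this is not
differentiable at `ξ = 0` because of the term `η t |ξ|`.
-/

open Real Filter Asymptotics
open scoped FourierTransform

section Decay

variable {E : Type*} [NormedAddCommGroup E]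

lemma isBigO_abs_rpow_neg_one_add_norm {s : ℝ} (hs : 0 ≤ s) :
    (fun x : ℝ ↦ |x| ^ (-s)) =O[cocompact ℝ] fun x ↦ (1 + ‖x‖) ^ (-s) := by
  refine IsBigO.of_bound (2 ^ s) ?_
  filter_upwards [tendsto_norm_cocompact_atTop.eventually_ge_atTop 1] with x hx
  rw [Real.norm_eq_abs] at hx
  have hx0 : 0 < |x| := by linarith
  have hle : (2 * |x|) ^ (-s) ≤ (1 + |x|) ^ (-s) :=
    rpow_le_rpow_of_nonpos (by positivity) (by linarith) (by linarith)
  rw [mul_rpow zero_le_two hx0.le, rpow_neg zero_le_two] at hle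
  rw [Real.norm_of_nonneg (by positivity), Real.norm_of_nonneg (by positivity), Real.norm_eq_abs]
  calc |x| ^ (-s) = 2 ^ s * ((2 ^ s)⁻¹ * |x| ^ (-s)) := by
        field_simp
    _ ≤ 2 ^ s * (1 + |x|) ^ (-s) := by gcongr

lemma integrable_of_isBigO_abs_rpow_neg {f : ℝ → E} (hf : Continuous f) {s : ℝ} (hs : 1 < s)
    (h : f =O[cocompact ℝ] fun x ↦ |x| ^ (-s)) : Integrable f :=
  hf.locallyIntegrable.integrable_of_isBigO_cocompact
    (h.trans (isBigO_abs_rpow_neg_one_add_norm (by linarith)))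
    ((integrable_one_add_norm (E := ℝ) (by simpa using hs)).integrableAtFilter _)

lemma isBigO_smul_of_isBigO_abs_rpow_neg [NormedSpace ℝ E] {f : ℝ → E} {s : ℝ}
    (h : f =O[cocompact ℝ] fun x ↦ |x| ^ (-s)) :
    (fun x ↦ x • f x) =O[cocompact ℝ] fun x ↦ |x| ^ (-(s - 1)) := by
  obtain ⟨c, hc⟩ := h.bound
  refine IsBigO.of_bound c ?_
  filter_upwards [hc, tendsto_norm_cocompact_atTop.eventually_gt_atTop 0] with x hx hx0
  rw [Real.norm_eq_abs] at hx0
  rw [Real.norm_of_nonneg (by positivity)] at hx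
  rw [Real.norm_of_nonneg (by positivity), norm_smul, Real.norm_eq_abs,
    show -(s - 1) = 1 + -s by ring, rpow_add hx0, rpow_one, mul_left_comm]
  gcongr

end Decay

lemma differentiable_of_isBigO_fourierInv {E : Type*} [NormedAddCommGroup E] [NormedSpace ℂ E]
    [CompleteSpace E] {g : ℝ → E} (hg : Integrable g) (hgc : Continuous g) {s : ℝ} (hs : 2 < s)
    (h : 𝓕⁻ g =O[cocompact ℝ] fun x ↦ |x| ^ (-s)) : Differentiable ℝ g := by
  have hKc : Continuous (𝓕⁻ g) := by
    rw [Real.fourierInv_eq_fourier_comp_neg]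
    exact VectorFourier.fourierIntegral_continuous Real.continuous_fourierChar
      continuous_inner hg.comp_neg
  have hK : Integrable (𝓕⁻ g) := integrable_of_isBigO_abs_rpow_neg hKc (by linarith) h
  have hxK : Integrable fun x : ℝ ↦ x • 𝓕⁻ g x :=
    integrable_of_isBigO_abs_rpow_neg (by fun_prop) (by linarith)
      (isBigO_smul_of_isBigO_abs_rpow_neg h)
  have hFg : Integrable (𝓕 g) := by
    have hFg_eq : 𝓕 g = fun w ↦ 𝓕⁻ g (-w) :=
      funext fun w ↦ by rw [Real.fourierInv_eq_fourier_neg, neg_neg]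
    exact hFg_eq ▸ hK.comp_neg
  rw [← hgc.fourier_fourierInv_eq hg hFg]
  exact fun w ↦ (Real.hasDerivAt_fourier hK hxK w).differentiableAt

lemma norm_ostSymbol (η t ξ : ℝ) :
    ‖ostSymbol η t ξ‖ = exp (-(η * t * (|ξ| ^ 3 - |ξ|))) := by
  rw [ostSymbol, Complex.norm_exp]
  simp [-Complex.ofReal_pow]

lemma continuous_ostSymbol (η t : ℝ) : Continuous (ostSymbol η t) := by
  unfold ostSymbol
  fun_prop

lemma integrable_ostSymbol {η t : ℝ} (hη : 0 < η) (ht : 0 < t) :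
    Integrable (ostSymbol η t) := by
  have hb : 0 < η * t := mul_pos hη ht
  refine ((integrable_exp_neg_mul_sq hb).const_mul (exp (η * t))).mono'
    (continuous_ostSymbol η t).aestronglyMeasurable (ae_of_all _ fun ξ ↦ ?_)
  rw [norm_ostSymbol, ← exp_add, exp_le_exp, ← sq_abs ξ]
  -- `|ξ|³ - |ξ| - (ξ² - 1) = (|ξ| - 1)² (|ξ| + 1)`
  have key : 0 ≤ (|ξ| - 1) ^ 2 * (|ξ| + 1) := by positivity
  nlinarith [mul_nonneg hb.le key]

lemma ostKernel_eq_fourierInv (η t : ℝ) : ostKernel η t = 𝓕⁻ (ostSymbol η t) := by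
  funext x
  rw [Real.fourierInv_eq', ostKernel]
  congr 1 with ξ
  simp only [smul_eq_mul, RCLike.inner_apply, conj_trivial]
  push_cast
  ring_nf

lemma ostSymbol_not_differentiableAt_zero {η t : ℝ} (hη : η ≠ 0) (ht : t ≠ 0) :
    ¬ DifferentiableAt ℝ (ostSymbol η t) 0 := by
  intro hσ
  have hσ0 : ostSymbol η t 0 ≠ 0 := by simp [ostSymbol]
  have hlog : DifferentiableAt ℝ (fun ξ ↦ -(η * t * (|ξ| ^ 3 - |ξ|))) 0 := by
    simpa only [norm_ostSymbol, log_exp] using (hσ.norm ℝ hσ0).log (norm_ne_zero_iff.2 hσ0)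
  have hcube : DifferentiableAt ℝ (fun ξ : ℝ ↦ ‖ξ‖ ^ (3 : ℝ)) 0 :=
    differentiable_norm_rpow (by norm_num) 0
  have habs : (abs : ℝ → ℝ) =
      fun ξ ↦ ‖ξ‖ ^ (3 : ℝ) + (η * t)⁻¹ * -(η * t * (|ξ| ^ 3 - |ξ|)) := by
    funext ξ
    rw [Real.norm_eq_abs, ← Nat.cast_ofNat, rpow_natCast]
    field_simp
    ring
  refine not_differentiableAt_abs_zero ?_
  rw [habs]
  exact hcube.add (hlog.const_mul _)

theorem stmt7 : ∀ η t : ℝ, 0 < η → 0 < t →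
    ¬ ∃ ε > (0:ℝ), ∃ M > (0:ℝ), ∃ C > (0:ℝ), ∀ x : ℝ, M < |x| →
      ‖ostKernel η t x‖ ≤ C / |x| ^ (2 + ε) := by
  rintro η t hη ht ⟨ε, hε, M, -, C, -, hdecay⟩
  have hK : 𝓕⁻ (ostSymbol η t) =O[cocompact ℝ] fun x ↦ |x| ^ (-(2 + ε)) := by
    rw [← ostKernel_eq_fourierInv]
    refine IsBigO.of_bound C ?_
    filter_upwards [tendsto_norm_cocompact_atTop.eventually_gt_atTop M] with x hx
    rw [Real.norm_of_nonneg (by positivity), rpow_neg (abs_nonneg x), ← div_eq_mul_inv]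
    exact hdecay x hx
  exact ostSymbol_not_differentiableAt_zero hη.ne' ht.ne' <|
    differentiable_of_isBigO_fourierInv (integrable_ostSymbol hη ht) (continuous_ostSymbol η t)
      (by linarith) hK 0
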